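/- (Separable ball around the maximally mixed two-qubit state, PPT form) For any density matrix σ on ℂ² ⊗ ℂ² and any 0 ≤ p ≤ 1/3, the state ρ = p σ + (1−p)·I/4 has positive semidefinite partial transpose. -/

import Mathlib

/-!
Write `σ = ∑ v vᴴ` as a sum of rank-one terms and view vectors on `Fin m × Fin 2` as `m × 2`
matrices. For one term, `⟪x, ptB (v vᴴ) x⟫ = ∑ₖₗ conj Hₗₖ Hₖₗ` where `Hₖₗ = ⟪vₖ, xₗ⟫` pairs the
columns of `v` and `x`. Only the off-diagonal pair can be negative, and by Cauchy–Schwarz and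
AM–GM it is at least `-2 ‖v₁‖‖x₀‖‖v₀‖‖x₁‖ ≥ -‖v‖²‖x‖²/2`. Hence `ptB σ + (tr σ / 2) • 1 ⪰ 0`, and
`ptB ρ = p (ptB σ + 1/2) + (1 - 3p)/4` is a nonnegative combination of positive matrices.
-/

open Matrix
open scoped ComplexOrder

/-- Partial transposition on the second factor of a bipartite matrix. -/
noncomputable def ptB {m n : ℕ}
    (M : Matrix (Fin m × Fin n) (Fin m × Fin n) ℂ) :
    Matrix (Fin m × Fin n) (Fin m × Fin n) ℂ :=
  fun p q => M (p.1, q.2) (q.1, p.2)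

theorem Matrix.IsHermitian.posSemidef_of_re_dotProduct_mulVec_nonneg {n 𝕜 : Type*} [Fintype n]
    [RCLike 𝕜] {A : Matrix n n 𝕜} (hA : A.IsHermitian)
    (h : ∀ x, 0 ≤ RCLike.re (star x ⬝ᵥ (A *ᵥ x))) : A.PosSemidef :=
  .of_dotProduct_mulVec_nonneg hA fun x =>
    RCLike.nonneg_iff.mpr ⟨h x, hA.im_star_dotProduct_mulVec_self x⟩

theorem dotProduct_star_self_eq {ι : Type*} [Fintype ι] (x : ι → ℂ) :
    star x ⬝ᵥ x = ((∑ i, ‖x i‖ ^ 2 : ℝ) : ℂ) := by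
  simp [dotProduct, Complex.conj_mul']

theorem norm_sum_star_mul_le {ι : Type*} [Fintype ι] (f g : ι → ℂ) :
    ‖∑ i, star (f i) * g i‖ ≤ √(∑ i, ‖f i‖ ^ 2) * √(∑ i, ‖g i‖ ^ 2) :=
  calc ‖∑ i, star (f i) * g i‖ ≤ ∑ i, ‖f i‖ * ‖g i‖ := by
        simpa only [norm_mul, norm_star] using norm_sum_le Finset.univ fun i => star (f i) * g i
    _ ≤ _ := Real.sum_mul_le_sqrt_mul_sqrt _ _ _

theorem neg_two_mul_le_re_sum_fin_two (H : Matrix (Fin 2) (Fin 2) ℂ) :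
    -(2 * (‖H 1 0‖ * ‖H 0 1‖)) ≤ (∑ k, ∑ l, star (H l k) * H k l).re := by
  have hdiag : ∀ k, 0 ≤ (star (H k k) * H k k).re := fun k => by
    rw [Complex.star_def, Complex.conj_mul']; norm_cast; positivity
  have hoff : (star (H 0 1) * H 1 0).re = (star (H 1 0) * H 0 1).re := by
    simp only [Complex.mul_re, Complex.star_def, Complex.conj_re, Complex.conj_im]; ring
  have hcross : -‖star (H 1 0) * H 0 1‖ ≤ (star (H 1 0) * H 0 1).re :=
    (abs_le.mp (Complex.abs_re_le_norm _)).1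
  simp only [Fin.sum_univ_two, Complex.add_re]
  rw [norm_mul, norm_star] at hcross
  linarith [hdiag 0, hdiag 1]

section PartialTranspose

variable {m n : ℕ}

theorem ptB_add (M N : Matrix (Fin m × Fin n) (Fin m × Fin n) ℂ) :
    ptB (M + N) = ptB M + ptB N := rfl

theorem ptB_smul (c : ℂ) (M : Matrix (Fin m × Fin n) (Fin m × Fin n) ℂ) :
    ptB (c • M) = c • ptB M := rfl

theorem ptB_sum {ι : Type*} (s : Finset ι) (M : ι → Matrix (Fin m × Fin n) (Fin m × Fin n) ℂ) :
    ptB (∑ i ∈ s, M i) = ∑ i ∈ s, ptB (M i) := by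
  ext; simp [ptB, Matrix.sum_apply]

theorem ptB_one : ptB (1 : Matrix (Fin m × Fin n) (Fin m × Fin n) ℂ) = 1 := by
  ext ⟨i, k⟩ ⟨j, l⟩
  simp only [ptB, one_apply, Prod.mk.injEq]
  grind

theorem Matrix.IsHermitian.ptB {M : Matrix (Fin m × Fin n) (Fin m × Fin n) ℂ}
    (hM : M.IsHermitian) : (ptB M).IsHermitian := by
  ext p q
  simpa [_root_.ptB] using hM.apply (p.1, q.2) (q.1, p.2)

def colGram (v x : Fin m × Fin n → ℂ) : Matrix (Fin n) (Fin n) ℂ :=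
  of fun k l => ∑ i, star (v (i, k)) * x (i, l)

theorem star_dotProduct_ptB_vecMulVec_mulVec (v x : Fin m × Fin n → ℂ) :
    star x ⬝ᵥ (ptB (vecMulVec v (star v)) *ᵥ x)
      = ∑ k, ∑ l, star (colGram v x l k) * colGram v x k l := by
  simp only [dotProduct, mulVec, ptB, vecMulVec, colGram, of_apply, Fintype.sum_prod_type,
    Finset.mul_sum, Finset.sum_mul, star_sum, star_mul', star_star, Pi.star_apply]
  rw [Finset.sum_comm]
  refine Finset.sum_congr rfl fun k _ => ?_
  rw [Finset.sum_comm]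
  refine (Finset.sum_congr rfl fun j _ => Finset.sum_comm).trans ?_
  rw [Finset.sum_comm]
  refine Finset.sum_congr rfl fun l _ => ?_
  refine Finset.sum_congr rfl fun j _ => Finset.sum_congr rfl fun i _ => ?_
  ring

noncomputable def colNorm (v : Fin m × Fin n → ℂ) (k : Fin n) : ℝ :=
  √(∑ i, ‖v (i, k)‖ ^ 2)

theorem colNorm_nonneg (v : Fin m × Fin n → ℂ) (k : Fin n) : 0 ≤ colNorm v k :=
  Real.sqrt_nonneg _

theorem colNorm_sq (v : Fin m × Fin n → ℂ) (k : Fin n) : colNorm v k ^ 2 = ∑ i, ‖v (i, k)‖ ^ 2 :=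
  Real.sq_sqrt (Finset.sum_nonneg fun _ _ => by positivity)

theorem colNorm_sq_add_colNorm_sq (v : Fin m × Fin 2 → ℂ) :
    colNorm v 0 ^ 2 + colNorm v 1 ^ 2 = ∑ a, ‖v a‖ ^ 2 := by
  rw [colNorm_sq, colNorm_sq, Fintype.sum_prod_type, ← Finset.sum_add_distrib]
  simp [Fin.sum_univ_two]

theorem norm_colGram_le (v x : Fin m × Fin n → ℂ) (k l : Fin n) :
    ‖colGram v x k l‖ ≤ colNorm v k * colNorm x l :=
  norm_sum_star_mul_le (fun i => v (i, k)) (fun i => x (i, l))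

theorem neg_half_mul_le_re_star_dotProduct_ptB_vecMulVec_mulVec (v x : Fin m × Fin 2 → ℂ) :
    -((∑ a, ‖v a‖ ^ 2) * (∑ a, ‖x a‖ ^ 2) / 2)
      ≤ (star x ⬝ᵥ (ptB (vecMulVec v (star v)) *ᵥ x)).re := by
  rw [star_dotProduct_ptB_vecMulVec_mulVec, ← colNorm_sq_add_colNorm_sq v,
    ← colNorm_sq_add_colNorm_sq x]
  set H := colGram v x
  have hv := two_mul_le_add_sq (colNorm v 0) (colNorm v 1)
  have hx := two_mul_le_add_sq (colNorm x 0) (colNorm x 1)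
  have := colNorm_nonneg v 0
  have := colNorm_nonneg v 1
  have := colNorm_nonneg x 0
  have := colNorm_nonneg x 1
  calc -((colNorm v 0 ^ 2 + colNorm v 1 ^ 2) * (colNorm x 0 ^ 2 + colNorm x 1 ^ 2) / 2)
      ≤ -(2 * ((colNorm v 1 * colNorm x 0) * (colNorm v 0 * colNorm x 1))) := by
        nlinarith [mul_le_mul hv hx (by positivity) (by positivity)]
    _ ≤ -(2 * (‖H 1 0‖ * ‖H 0 1‖)) := by
        gcongr
        exacts [norm_colGram_le v x 1 0, norm_colGram_le v x 0 1]
    _ ≤ _ := neg_two_mul_le_re_sum_fin_two H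

theorem posSemidef_ptB_vecMulVec_add_half_trace (v : Fin m × Fin 2 → ℂ) :
    (ptB (vecMulVec v (star v)) + ((vecMulVec v (star v)).trace / 2) • 1).PosSemidef := by
  have htrace : (vecMulVec v (star v)).trace / 2 = ((∑ a, ‖v a‖ ^ 2 / 2 : ℝ) : ℂ) := by
    rw [trace_vecMulVec, dotProduct_comm, dotProduct_star_self_eq, ← Finset.sum_div]
    push_cast; rfl
  rw [htrace]
  refine ((posSemidef_vecMulVec_self_star v).isHermitian.ptB.add
    (PosSemidef.one.smul ?_).isHermitian).posSemidef_of_re_dotProduct_mulVec_nonneg fun x => ?_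
  · exact_mod_cast by positivity
  · rw [add_mulVec, dotProduct_add, smul_mulVec, one_mulVec, dotProduct_smul,
      dotProduct_star_self_eq, smul_eq_mul, ← Complex.ofReal_mul, map_add]
    have := neg_half_mul_le_re_star_dotProduct_ptB_vecMulVec_mulVec v x
    rw [RCLike.re_to_complex, RCLike.re_to_complex, Complex.ofReal_re, ← Finset.sum_div]
    linarith

theorem posSemidef_ptB_add_half_trace {σ : Matrix (Fin m × Fin 2) (Fin m × Fin 2) ℂ}
    (hσ : σ.PosSemidef) : (ptB σ + (σ.trace / 2) • 1).PosSemidef := by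
  obtain ⟨r, v, rfl⟩ := posSemidef_iff_eq_sum_vecMulVec.mp hσ
  rw [ptB_sum, trace_sum, Finset.sum_div, Finset.sum_smul, ← Finset.sum_add_distrib]
  exact posSemidef_sum _ fun i _ => posSemidef_ptB_vecMulVec_add_half_trace (v i)

end PartialTranspose

/-- (Separable ball around the maximally mixed two-qubit state, PPT form)
For any two-qubit density matrix `σ` and any `0 ≤ p ≤ 1/3`, the state
`ρ = p σ + (1−p)·I/4` has positive semidefinite partial transpose. -/
theorem ppt_ball_two_qubits (σ : Matrix (Fin 2 × Fin 2) (Fin 2 × Fin 2) ℂ)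
    (hσ : σ.PosSemidef) (htr : σ.trace = 1)
    (p : ℝ) (hp0 : 0 ≤ p) (hp : p ≤ 1 / 3) :
    (ptB ((p : ℂ) • σ +
      ((1 - p : ℝ) : ℂ) • ((4 : ℂ)⁻¹ •
        (1 : Matrix (Fin 2 × Fin 2) (Fin 2 × Fin 2) ℂ)))).PosSemidef := by
  have hρ : ptB ((p : ℂ) • σ + ((1 - p : ℝ) : ℂ) • ((4 : ℂ)⁻¹ • 1))
      = (p : ℂ) • (ptB σ + (σ.trace / 2) • 1) + (((1 - 3 * p) / 4 : ℝ) : ℂ) • 1 := by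
    rw [ptB_add, ptB_smul, ptB_smul, ptB_smul, ptB_one, htr]
    push_cast
    module
  rw [hρ]
  exact ((posSemidef_ptB_add_half_trace hσ).smul (by exact_mod_cast hp0)).add
    (PosSemidef.one.smul (by norm_cast; linarith))
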